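/- If a function f : ℂ → ℂ is continuous on an open set U ⊆ ℂ and complex differentiable at every point of U \ X, where X ⊆ U is a compact countable set with exactly one accumulation point w, and w ∈ X (i.e., X is a Polish space with characteristic system (1, 1)), then for every triangle △(z₁, z₂, z₃) contained in U, the integral of f along the closed polygonal path [z₁, z₂, z₃, z₁] equals 0. -/

import Mathlib

open Set

/-- The complex line integral of `f` along the segment from `a` to `b`:
`∫_{t ∈ [0,1]} f((1-t)·a + t·b) · (b - a) dt`. -/
noncomputable def segmentIntegral (f : ℂ → ℂ) (a b : ℂ) : ℂ :=
  ∫ t in (0:ℝ)..1, f ((1 - t) • a + t • b) * (b - a)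

/-- The integral of `f` along the closed polygonal path `[z₁, z₂, z₃, z₁]`. -/
noncomputable def triangleIntegral (f : ℂ → ℂ) (z₁ z₂ z₃ : ℂ) : ℂ :=
  segmentIntegral f z₁ z₂ + segmentIntegral f z₂ z₃ + segmentIntegral f z₃ z₁

/-- `w` is an accumulation point of `X`: every neighborhood of `w` contains a
point of `X` other than `w`. -/
def IsAccumulationPoint (w : ℂ) (X : Set ℂ) : Prop :=
  ∀ V ∈ nhds w, ∃ x, x ∈ V ∩ X ∧ x ≠ w

open Metric

/-!
Continuity together with complex differentiability off a countable set already forces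
holomorphy (the Cauchy integral formula on small discs survives countably many exceptional
points). A holomorphic function on a convex set has a primitive there (Poincaré lemma), and the
integral of a derivative along the closed polygon `[z₁, z₂, z₃, z₁]` telescopes to zero.
-/

theorem differentiableOn_of_differentiableAt_off_countable {E : Type*} [NormedAddCommGroup E]
    [NormedSpace ℂ E] [CompleteSpace E] {f : ℂ → E} {U X : Set ℂ} (hU : IsOpen U)
    (hf : ContinuousOn f U) (hX : X.Countable) (hd : ∀ z ∈ U \ X, DifferentiableAt ℂ f z) :
    DifferentiableOn ℂ f U := by
  intro z hz
  obtain ⟨R, hR, hRU⟩ := nhds_basis_closedBall.mem_iff.1 (hU.mem_nhds hz)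
  lift R to NNReal using hR.le
  have hseries := Complex.hasFPowerSeriesOnBall_of_differentiable_off_countable hX
    (hf.mono hRU) (fun y hy => hd y ⟨hRU (ball_subset_closedBall hy.1), hy.2⟩) hR
  exact hseries.analyticAt.differentiableAt.differentiableWithinAt

theorem segmentIntegral_eq_sub_of_hasDerivWithinAt {f g : ℂ → ℂ} {s : Set ℂ} {a b : ℂ}
    (hab : segment ℝ a b ⊆ s) (hf : ContinuousOn f s)
    (hg : ∀ z ∈ s, HasDerivWithinAt g (f z) s z) :
    segmentIntegral f a b = g b - g a := by
  set γ : ℝ → ℂ := fun t => (1 - t) • a + t • b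
  have hγs : MapsTo γ (Icc 0 1) s := fun t ht =>
    hab ⟨1 - t, t, by linarith [ht.2], ht.1, by ring, rfl⟩
  have hγ : ∀ t, HasDerivAt γ (b - a) t := fun t => by
    refine ((((hasDerivAt_id t).const_sub 1).smul_const a).add
      ((hasDerivAt_id t).smul_const b)).congr_deriv ?_
    simp only [neg_smul, one_smul]
    abel
  have hgγ : ∀ t ∈ Icc (0 : ℝ) 1,
      HasDerivWithinAt (g ∘ γ) (f (γ t) * (b - a)) (Icc 0 1) t := fun t ht => by
    simpa [mul_comm] using (hg _ (hγs ht)).scomp t (hγ t).hasDerivWithinAt hγs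
  have hfγ : ContinuousOn (fun t => f (γ t) * (b - a)) (Icc 0 1) :=
    (hf.comp (by fun_prop) hγs).mul continuousOn_const
  have := intervalIntegral.integral_eq_sub_of_hasDerivAt_of_le zero_le_one
    (fun t ht => (hgγ t ht).continuousWithinAt)
    (fun t ht => (hgγ t (Ioo_subset_Icc_self ht)).hasDerivAt (Icc_mem_nhds ht.1 ht.2))
    (hfγ.intervalIntegrable_of_Icc zero_le_one)
  rw [segmentIntegral, this]
  simp [γ]

theorem triangleIntegral_eq_zero_of_differentiableOn {f : ℂ → ℂ} {s : Set ℂ} {z₁ z₂ z₃ : ℂ}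
    (hs : Convex ℝ s) (hf : DifferentiableOn ℂ f s) (h₁ : z₁ ∈ s) (h₂ : z₂ ∈ s) (h₃ : z₃ ∈ s) :
    triangleIntegral f z₁ z₂ z₃ = 0 := by
  obtain ⟨g, hg⟩ := hs.exists_forall_hasDerivWithinAt hf
  have hedge : ∀ {a b}, a ∈ s → b ∈ s → segmentIntegral f a b = g b - g a := fun ha hb =>
    segmentIntegral_eq_sub_of_hasDerivWithinAt (hs.segment_subset ha hb) hf.continuousOn hg
  rw [triangleIntegral, hedge h₁ h₂, hedge h₂ h₃, hedge h₃ h₁]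
  ring

theorem stmt_8_general (f : ℂ → ℂ) (U : Set ℂ) (hU : IsOpen U)
    (hf : ContinuousOn f U) (X : Set ℂ) (hXcount : X.Countable)
    (hd : ∀ z ∈ U \ X, DifferentiableAt ℂ f z)
    (z₁ z₂ z₃ : ℂ) (htri : convexHull ℝ {z₁, z₂, z₃} ⊆ U) :
    triangleIntegral f z₁ z₂ z₃ = 0 := by
  have hfU := differentiableOn_of_differentiableAt_off_countable hU hf hXcount hd
  exact triangleIntegral_eq_zero_of_differentiableOn (convex_convexHull ℝ _) (hfU.mono htri)
    (subset_convexHull ℝ _ (by simp)) (subset_convexHull ℝ _ (by simp))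
    (subset_convexHull ℝ _ (by simp))

theorem stmt_8 (f : ℂ → ℂ) (U : Set ℂ) (hU : IsOpen U)
    (hf : ContinuousOn f U) (X : Set ℂ) (hXU : X ⊆ U)
    (hXcomp : IsCompact X) (hXcount : X.Countable)
    (w : ℂ) (hacc : {p | IsAccumulationPoint p X} = {w}) (hwX : w ∈ X)
    (hd : ∀ z ∈ U \ X, DifferentiableAt ℂ f z)
    (z₁ z₂ z₃ : ℂ) (htri : convexHull ℝ {z₁, z₂, z₃} ⊆ U) :
    triangleIntegral f z₁ z₂ z₃ = 0 :=
  stmt_8_general f U hU hf X hXcount hd z₁ z₂ z₃ htri
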